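/- arXiv:1510.07758 — 6 statements merged into one kernel-verified Lean document; each statement's English description precedes it below -/
import Mathlib

section
/- Let T be a rooted phylogenetic tree on species set L(T) with |L(T)| > 2, and let u_1, …, u_p be the children of the root of T (so p ≥ 2). Define the triplet graph of T as the graph on vertex set L(T) with an edge between species a and b iff there exists c in L(T) with ab|c an induced rooted triple of T (i.e., the restriction of T to {a,b,c} is binary with a,b separated from c). Then the connected components of this graph are exactly the clusters L(u_1), …, L(u_p). -/
attribute [local instance] Classical.propDecidable

/-- A rooted phylogenetic tree on a finite species set, represented by its
(laminar) family of clusters, which contains the full leaf set and all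
singletons.  By the classical correspondence, such families are exactly the
cluster sets of rooted phylogenetic trees (internal nodes with ≥ 2 children). -/
structure PhyloTree (S : Type) [DecidableEq S] where
  leaves : Finset S
  clusters : Finset (Finset S)
  leaves_nonempty : leaves.Nonempty
  leaves_mem : leaves ∈ clusters
  singleton_mem : ∀ x ∈ leaves, ({x} : Finset S) ∈ clusters
  subset_leaves : ∀ C ∈ clusters, C ⊆ leaves
  nonempty_mem : ∀ C ∈ clusters, C.Nonempty
  laminar : ∀ C ∈ clusters, ∀ D ∈ clusters, C ∩ D = ∅ ∨ C ⊆ D ∨ D ⊆ C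

variable {S : Type} [DecidableEq S]

/-- Restriction of a family of clusters to a subset `A` of species:
`{C ∩ A : C ∈ H, C ∩ A ≠ ∅}`. -/
def restrictFam (H : Finset (Finset S)) (A : Finset S) : Finset (Finset S) :=
  (H.image (fun C => C ∩ A)).filter (fun C => C.Nonempty)

/-- The cluster set of the restriction `T|A`. -/
def restrictClusters (T : PhyloTree S) (A : Finset S) : Finset (Finset S) :=
  restrictFam T.clusters A

/-- `T` displays `T'`: every cluster of `T'` is a cluster of `T|L(T')`. -/
def Displays (T T' : PhyloTree S) : Prop :=
  T'.clusters ⊆ restrictClusters T T'.leaves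

/-- `T` induces the rooted triple `ab|c`: the restriction of `T` to `{a,b,c}`
is binary with `a,b` separated from `c`, i.e. `{a,b}` is a cluster of it. -/
def Triple (T : PhyloTree S) (a b c : S) : Prop :=
  a ∈ T.leaves ∧ b ∈ T.leaves ∧ c ∈ T.leaves ∧ a ≠ b ∧ a ≠ c ∧ b ≠ c ∧
    ({a, b} : Finset S) ∈ restrictClusters T ({a, b, c} : Finset S)

/-- `C` is the cluster of a child of the root of `T`: a maximal proper cluster. -/
def MaxProper (T : PhyloTree S) (C : Finset S) : Prop :=
  C ∈ T.clusters ∧ C ≠ T.leaves ∧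
    ∀ D ∈ T.clusters, C ⊆ D → D = C ∨ D = T.leaves

/-- Adjacency in the triplet graph of the single tree `T`. -/
def TAdj (T : PhyloTree S) (a b : S) : Prop :=
  a ≠ b ∧ ∃ c : S, Triple T a b c


lemma mem_restrict {T : PhyloTree S} {A B : Finset S} :
    B ∈ restrictClusters T A ↔ (∃ E ∈ T.clusters, E ∩ A = B) ∧ B.Nonempty := by
  simp only [restrictClusters, restrictFam, Finset.mem_filter, Finset.mem_image]

lemma exists_maxProper (T : PhyloTree S) (h1 : 1 < T.leaves.card)
    {x : S} (hx : x ∈ T.leaves) : ∃ C, MaxProper T C ∧ x ∈ C := by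
  classical
  set s := T.clusters.filter (fun C => x ∈ C ∧ C ≠ T.leaves) with hs
  have hne : s.Nonempty := by
    refine ⟨{x}, ?_⟩
    simp only [hs, Finset.mem_filter]
    refine ⟨T.singleton_mem x hx, Finset.mem_singleton_self x, ?_⟩
    intro heq
    have : T.leaves.card = 1 := by rw [← heq]; simp
    omega
  obtain ⟨C, hCs, hmax⟩ := Finset.exists_max_image s Finset.card hne
  rw [hs, Finset.mem_filter] at hCs
  refine ⟨C, ⟨hCs.1, hCs.2.2, ?_⟩, hCs.2.1⟩
  intro D hD hCD
  by_cases hDl : D = T.leaves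
  · exact Or.inr hDl
  · left
    have hDs : D ∈ s := by
      rw [hs, Finset.mem_filter]
      exact ⟨hD, hCD hCs.2.1, hDl⟩
    exact (Finset.eq_of_subset_of_card_le hCD (hmax D hDs)).symm

lemma maxProper_eq (T : PhyloTree S) {C D : Finset S} (hC : MaxProper T C)
    (hD : MaxProper T D) {x : S} (hxC : x ∈ C) (hxD : x ∈ D) : C = D := by
  rcases T.laminar C hC.1 D hD.1 with h | h | h
  · exact absurd h (Finset.Nonempty.ne_empty ⟨x, Finset.mem_inter.2 ⟨hxC, hxD⟩⟩)
  · rcases hC.2.2 D hD.1 h with h' | h'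
    · exact h'.symm
    · exact absurd h' hD.2.1
  · rcases hD.2.2 C hC.1 h with h' | h'
    · exact h'
    · exact absurd h' hC.2.1

lemma tadj_step (T : PhyloTree S) (h1 : 1 < T.leaves.card) {a b : S}
    (hab : TAdj T a b) : ∃ C, MaxProper T C ∧ a ∈ C ∧ b ∈ C := by
  obtain ⟨hne, c, ha, hb, hc, hab', hac, hbc, hmem⟩ := hab
  rw [mem_restrict] at hmem
  obtain ⟨⟨E, hE, hEab⟩, -⟩ := hmem
  have haE : a ∈ E := by
    have : a ∈ E ∩ ({a, b, c} : Finset S) := by rw [hEab]; simp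
    exact (Finset.mem_inter.1 this).1
  have hbE : b ∈ E := by
    have : b ∈ E ∩ ({a, b, c} : Finset S) := by rw [hEab]; simp
    exact (Finset.mem_inter.1 this).1
  have hcE : c ∉ E := by
    intro hcE
    have : c ∈ E ∩ ({a, b, c} : Finset S) := Finset.mem_inter.2 ⟨hcE, by simp⟩
    rw [hEab] at this
    rcases Finset.mem_insert.1 this with h' | h'
    · exact hac h'.symm
    · exact hbc (Finset.mem_singleton.1 h').symm
  have hEl : E ≠ T.leaves := fun h' => hcE (h' ▸ hc)
  obtain ⟨C, hC, haC⟩ := exists_maxProper T h1 ha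
  rcases T.laminar C hC.1 E hE with h' | h' | h'
  · exact absurd h' (Finset.Nonempty.ne_empty ⟨a, Finset.mem_inter.2 ⟨haC, haE⟩⟩)
  · rcases hC.2.2 E hE h' with h'' | h''
    · exact ⟨C, hC, haC, h'' ▸ hbE⟩
    · exact absurd h'' hEl
  · exact ⟨C, hC, haC, h' hbE⟩

lemma tadj_of_mem (T : PhyloTree S) {C : Finset S} (hC : MaxProper T C)
    {a b : S} (haC : a ∈ C) (hbC : b ∈ C) (hab : a ≠ b) : TAdj T a b := by
  have hCl : C ⊆ T.leaves := T.subset_leaves C hC.1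
  obtain ⟨c, hcl, hcC⟩ : ∃ c, c ∈ T.leaves ∧ c ∉ C := by
    by_contra hcon
    push_neg at hcon
    exact hC.2.1 (Finset.Subset.antisymm hCl hcon)
  refine ⟨hab, c, hCl haC, hCl hbC, hcl, hab, fun h => hcC (h ▸ haC),
    fun h => hcC (h ▸ hbC), ?_⟩
  rw [mem_restrict]
  refine ⟨⟨C, hC.1, ?_⟩, ⟨a, by simp⟩⟩
  ext x
  simp only [Finset.mem_inter, Finset.mem_insert, Finset.mem_singleton]
  constructor
  · rintro ⟨hxC, rfl | rfl | rfl⟩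
    · exact Or.inl rfl
    · exact Or.inr rfl
    · exact absurd hxC hcC
  · rintro (rfl | rfl)
    · exact ⟨haC, Or.inl rfl⟩
    · exact ⟨hbC, Or.inr (Or.inl rfl)⟩

/-- For a rooted phylogenetic tree `T` with more than two
leaves, the connected components of the triplet graph of `T` are exactly the
clusters of the children of the root (and the root has at least two
children). -/
theorem stmt2 (T : PhyloTree S) (h : 2 < T.leaves.card) :
    (∀ a ∈ T.leaves, ∀ b ∈ T.leaves,
      (Relation.ReflTransGen (TAdj T) a b ↔
        ∃ C : Finset S, MaxProper T C ∧ a ∈ C ∧ b ∈ C)) ∧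
    2 ≤ (T.clusters.filter (fun C => MaxProper T C)).card := by
  have h1 : 1 < T.leaves.card := by omega
  constructor
  · intro a ha b hb
    constructor
    · intro hr
      induction hr with
      | refl => obtain ⟨C, hC, haC⟩ := exists_maxProper T h1 ha; exact ⟨C, hC, haC, haC⟩
      | tail _ hstep ih =>
        obtain ⟨C, hC, haC, hmC⟩ := ih hstep.2.choose_spec.1
        obtain ⟨D, hD, hmD, hbD⟩ := tadj_step T h1 hstep
        exact ⟨C, hC, haC, (maxProper_eq T hC hD hmC hmD) ▸ hbD⟩
    · rintro ⟨C, hC, haC, hbC⟩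
      by_cases hab : a = b
      · exact hab ▸ Relation.ReflTransGen.refl
      · exact Relation.ReflTransGen.single (tadj_of_mem T hC haC hbC hab)
  · obtain ⟨a, ha⟩ := T.leaves_nonempty
    obtain ⟨C, hC, haC⟩ := exists_maxProper T h1 ha
    have hCl : C ⊆ T.leaves := T.subset_leaves C hC.1
    obtain ⟨c, hcl, hcC⟩ : ∃ c, c ∈ T.leaves ∧ c ∉ C := by
      by_contra hcon
      push_neg at hcon
      exact hC.2.1 (Finset.Subset.antisymm hCl hcon)
    obtain ⟨D, hD, hcD⟩ := exists_maxProper T h1 hcl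
    have hCD : C ≠ D := fun h' => hcC (h' ▸ hcD)
    rw [show (2:ℕ) = 1 + 1 by rfl]
    refine Finset.one_lt_card.2 ⟨C, ?_, D, ?_, hCD⟩ <;>
      simp [Finset.mem_filter, hC, hD, hC.1, hD.1]
end

section
/- Let T and T' be rooted phylogenetic trees with L(T') ⊆ L(T). Then T displays T' (i.e., every cluster of T' is of the form C ∩ L(T') for some cluster C of T) if and only if every rooted triple induced by T' is also induced by T. -/
attribute [local instance] Classical.propDecidable

variable {S : Type} [DecidableEq S]

lemma mem_restrictFam {H : Finset (Finset S)} {A X : Finset S} :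
    X ∈ restrictFam H A ↔ X.Nonempty ∧ ∃ C ∈ H, C ∩ A = X := by
  simp [restrictFam, Finset.mem_filter, Finset.mem_image, and_comm]

lemma inter_triple {D : Finset S} {a b x : S} (ha : a ∈ D) (hb : b ∈ D) (hx : x ∉ D) :
    D ∩ ({a, b, x} : Finset S) = {a, b} := by
  ext y
  simp only [Finset.mem_inter, Finset.mem_insert, Finset.mem_singleton]
  constructor
  · rintro ⟨hyD, rfl | rfl | rfl⟩
    · exact Or.inl rfl
    · exact Or.inr rfl
    · exact absurd hyD hx
  · rintro (rfl | rfl)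
    · exact ⟨ha, Or.inl rfl⟩
    · exact ⟨hb, Or.inr (Or.inl rfl)⟩

lemma of_triple {T : PhyloTree S} {a b c : S} (h : Triple T a b c) :
    ∃ E ∈ T.clusters, a ∈ E ∧ b ∈ E ∧ c ∉ E := by
  obtain ⟨-, -, -, -, hac, hbc, hmem⟩ := h
  rw [restrictClusters, mem_restrictFam] at hmem
  obtain ⟨-, E, hE, hEeq⟩ := hmem
  have ha : a ∈ E ∩ ({a, b, c} : Finset S) := by
    rw [hEeq]; simp
  have hb : b ∈ E ∩ ({a, b, c} : Finset S) := by
    rw [hEeq]; simp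
  refine ⟨E, hE, (Finset.mem_inter.mp ha).1, (Finset.mem_inter.mp hb).1, ?_⟩
  intro hc
  have : c ∈ E ∩ ({a, b, c} : Finset S) := Finset.mem_inter.mpr ⟨hc, by simp⟩
  rw [hEeq] at this
  simp only [Finset.mem_insert, Finset.mem_singleton] at this
  rcases this with rfl | rfl
  · exact hac rfl
  · exact hbc rfl

/-- For rooted phylogenetic trees with `L(T') ⊆ L(T)`:
`T` displays `T'` iff every rooted triple induced by `T'` is induced by `T`. -/
theorem stmt4 (T T' : PhyloTree S) (hL : T'.leaves ⊆ T.leaves) :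
    Displays T T' ↔ ∀ a b c : S, Triple T' a b c → Triple T a b c := by
  constructor
  · rintro hd a b c ⟨ha, hb, hc, hab, hac, hbc, htr⟩
    refine ⟨hL ha, hL hb, hL hc, hab, hac, hbc, ?_⟩
    rw [restrictClusters, mem_restrictFam] at htr ⊢
    obtain ⟨hne, D, hD, hDe⟩ := htr
    obtain ⟨-, C, hC, hCe⟩ := mem_restrictFam.mp (hd hD)
    refine ⟨hne, C, hC, ?_⟩
    have hsub : ({a, b, c} : Finset S) ⊆ T'.leaves := by
      intro y hy
      simp only [Finset.mem_insert, Finset.mem_singleton] at hy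
      rcases hy with rfl | rfl | rfl <;> assumption
    calc C ∩ {a, b, c} = (C ∩ T'.leaves) ∩ {a, b, c} := by
          rw [Finset.inter_assoc, Finset.inter_eq_right.mpr hsub]
      _ = D ∩ {a, b, c} := by rw [hCe]
      _ = {a, b} := hDe
  · intro htr D hD
    have hDL : D ⊆ T'.leaves := T'.subset_leaves D hD
    have hDne : D.Nonempty := T'.nonempty_mem D hD
    rw [restrictClusters, mem_restrictFam]
    refine ⟨hDne, ?_⟩
    -- minimal-cardinality cluster of T containing D
    set s : Finset (Finset S) := T.clusters.filter (fun C => D ⊆ C) with hs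
    have hsne : s.Nonempty :=
      ⟨T.leaves, Finset.mem_filter.mpr ⟨T.leaves_mem, hDL.trans hL⟩⟩
    obtain ⟨C, hCs, hCmin⟩ := Finset.exists_min_image s Finset.card hsne
    have hC : C ∈ T.clusters := (Finset.mem_filter.mp hCs).1
    have hDC : D ⊆ C := (Finset.mem_filter.mp hCs).2
    refine ⟨C, hC, ?_⟩
    apply Finset.Subset.antisymm
    · intro x hx
      obtain ⟨hxC, hxL⟩ := Finset.mem_inter.mp hx
      by_contra hxD
      by_cases hcard : D.card ≤ 1
      · -- D is a singleton, so C = D by minimality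
        obtain ⟨a, rfl⟩ := Finset.card_eq_one.mp (le_antisymm hcard hDne.card_pos)
        have haL : a ∈ T.leaves := hL (hDL (Finset.mem_singleton_self a))
        have hsingle : ({a} : Finset S) ∈ s :=
          Finset.mem_filter.mpr ⟨T.singleton_mem a haL, Finset.Subset.refl _⟩
        have : C = {a} :=
          (Finset.eq_of_subset_of_card_le hDC (hCmin _ hsingle)).symm
        exact hxD (this ▸ hxC)
      · push_neg at hcard
        obtain ⟨a, haD, b, hbD, hab⟩ := Finset.one_lt_card.mp hcard
        have haL' : a ∈ T'.leaves := hDL haD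
        have hbL' : b ∈ T'.leaves := hDL hbD
        have hax : a ≠ x := fun h => hxD (h ▸ haD)
        -- a cluster of T containing a, b but not x
        have htrab : Triple T a b x :=
          htr a b x ⟨haL', hbL', hxL, hab, hax, fun h => hxD (h ▸ hbD),
            by rw [restrictClusters, mem_restrictFam]
               exact ⟨⟨a, by simp⟩, D, hD, inter_triple haD hbD hxD⟩⟩
        obtain ⟨E₀, hE₀, haE₀, hbE₀, hxE₀⟩ := of_triple htrab
        -- maximal-cardinality cluster containing a but not x
        set t : Finset (Finset S) := T.clusters.filter (fun E => a ∈ E ∧ x ∉ E) with ht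
        have htne : t.Nonempty := ⟨E₀, Finset.mem_filter.mpr ⟨hE₀, haE₀, hxE₀⟩⟩
        obtain ⟨Cx, hCxt, hCxmax⟩ := Finset.exists_max_image t Finset.card htne
        have hCx : Cx ∈ T.clusters := (Finset.mem_filter.mp hCxt).1
        have haCx : a ∈ Cx := (Finset.mem_filter.mp hCxt).2.1
        have hxCx : x ∉ Cx := (Finset.mem_filter.mp hCxt).2.2
        have hDCx : D ⊆ Cx := by
          intro d hdD
          by_cases hda : d = a
          · exact hda ▸ haCx
          · have htrad : Triple T a d x :=
              htr a d x ⟨haL', hDL hdD, hxL, fun h => hda (h.symm), hax,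
                fun h => hxD (h ▸ hdD),
                by rw [restrictClusters, mem_restrictFam]
                   exact ⟨⟨a, by simp⟩, D, hD, inter_triple haD hdD hxD⟩⟩
            obtain ⟨E, hE, haE, hdE, hxE⟩ := of_triple htrad
            have hEt : E ∈ t := Finset.mem_filter.mpr ⟨hE, haE, hxE⟩
            rcases T.laminar E hE Cx hCx with hemp | hsub | hsub
            · exact absurd hemp (Finset.nonempty_iff_ne_empty.mp ⟨a, Finset.mem_inter.mpr ⟨haE, haCx⟩⟩)
            · exact hsub hdE
            · have : Cx = E := Finset.eq_of_subset_of_card_le hsub (hCxmax _ hEt)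
              exact this ▸ hdE
        have hCxs : Cx ∈ s := Finset.mem_filter.mpr ⟨hCx, hDCx⟩
        rcases T.laminar C hC Cx hCx with hemp | hsub | hsub
        · exact absurd hemp (Finset.nonempty_iff_ne_empty.mp
            ⟨a, Finset.mem_inter.mpr ⟨hDC haD, haCx⟩⟩)
        · exact hxCx (hsub hxC)
        · have : Cx = C := Finset.eq_of_subset_of_card_le hsub (hCmin _ hCxs)
          exact hxCx (this ▸ hxC)
    · exact Finset.subset_inter hDC hDL
end

section
/- Let U be a valid subset of V(P). Then for each i, the cluster set of the restriction T_i|L(U) equals {L(U(i))} together with the set of clusters L(v) over all v that are descendants (in T_i) of some node in U(i). -/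
attribute [local instance] Classical.propDecidable

variable {S : Type} [DecidableEq S]

/-- A node of the profile `P` is a pair `(i, C)` with `C` a cluster (= node) of `T i`. -/
def NodeOf {k : ℕ} (P : Fin k → PhyloTree S) (u : Fin k × Finset S) : Prop :=
  u.2 ∈ (P u.1).clusters

/-- `L(U)`: the union of the clusters of the nodes in `U`. -/
def LofU {k : ℕ} (U : Finset (Fin k × Finset S)) : Finset S :=
  U.sup (fun u => u.2)

/-- `U(i) = U ∩ V(T_i)`, as the set of clusters of the nodes of `U` in tree `i`. -/
def Ui {k : ℕ} (U : Finset (Fin k × Finset S)) (i : Fin k) : Finset (Finset S) :=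
  (U.filter (fun u => u.1 = i)).image (fun u => u.2)

/-- Node (cluster) `C` is a child of node (cluster) `D` in `T`. -/
def IsChild (T : PhyloTree S) (C D : Finset S) : Prop :=
  C ∈ T.clusters ∧ D ∈ T.clusters ∧ C ⊂ D ∧
    ∀ E ∈ T.clusters, C ⊂ E → E ⊂ D → False

/-- The set of children (clusters) of the node with cluster `C` in `T`. -/
noncomputable def ChildrenOf (T : PhyloTree S) (C : Finset S) : Finset (Finset S) :=
  T.clusters.filter (fun D => IsChild T D C)

/-- `U` is a valid (nonempty) subset of `V(P)`. -/
def Valid {k : ℕ} (P : Fin k → PhyloTree S) (U : Finset (Fin k × Finset S)) : Prop :=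
  U.Nonempty ∧
  (∀ u ∈ U, NodeOf P u) ∧
  (∀ i : Fin k, 2 ≤ (Ui U i).card →
    ∃ D ∈ (P i).clusters, ∀ C ∈ Ui U i, IsChild (P i) C D) ∧
  (∀ i : Fin k, (Ui U i).sup id = (P i).leaves ∩ LofU U)

/-- `U` is compatible: some tree on `L(U)` displays `T_i|L(U)` for every `i`. -/
def CompatU {k : ℕ} (P : Fin k → PhyloTree S) (U : Finset (Fin k × Finset S)) : Prop :=
  ∃ T : PhyloTree S, T.leaves = LofU U ∧
    ∀ i : Fin k, restrictClusters (P i) (LofU U) ⊆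
      restrictClusters T ((P i).leaves ∩ LofU U)

/-- The profile `P` is compatible: some tree on `L(P)` displays every `T_i`. -/
def CompatP {k : ℕ} (P : Fin k → PhyloTree S) : Prop :=
  ∃ T : PhyloTree S, T.leaves = Finset.univ.sup (fun i => (P i).leaves) ∧
    ∀ i : Fin k, Displays T (P i)

/-- Edge `(a,b)` of the triplet graph of the restricted profile `P|A`:
some restricted tree `T_i|A` induces a rooted triple `ab|c`. -/
def TGEdge {k : ℕ} (P : Fin k → PhyloTree S) (A : Finset S) (a b : S) : Prop :=
  a ≠ b ∧ ∃ i : Fin k, ∃ c : S, c ∈ (P i).leaves ∩ A ∧ c ≠ a ∧ c ≠ b ∧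
    ∃ C ∈ restrictClusters (P i) A, a ∈ C ∧ b ∈ C ∧ c ∉ C

/-- Adjacency (within `U`) of the intersection graph `G_P(U)`. -/
def GPadj {k : ℕ} (U : Finset (Fin k × Finset S))
    (u v : Fin k × Finset S) : Prop :=
  u ∈ U ∧ v ∈ U ∧ (u.2 ∩ v.2).Nonempty

/-- **Observation 2.** For a valid subset `U` of `V(P)` and any
`i` with `U(i)` nonempty, the cluster set of `T_i|L(U)` is `{L(U(i))}`
together with the clusters of descendants of nodes of `U(i)`. -/
theorem stmt6 {k : ℕ} (P : Fin k → PhyloTree S)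
    (U : Finset (Fin k × Finset S)) (hU : Valid P U)
    (i : Fin k) (hne : (Ui U i).Nonempty) :
    restrictClusters (P i) (LofU U) =
      insert ((Ui U i).sup id)
        ((P i).clusters.filter (fun D => ∃ C ∈ Ui U i, D ⊆ C)) := by
  obtain ⟨hne', hnode, hchild, hsup⟩ := hU
  set A := LofU U with hA
  have hCsubA : ∀ C ∈ Ui U i, C ⊆ A := by
    intro C hC
    simp only [Ui, Finset.mem_image, Finset.mem_filter] at hC
    obtain ⟨u, ⟨huU, hui⟩, rfl⟩ := hC
    exact Finset.le_sup (f := fun u => u.2) huU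
  have hCcl : ∀ C ∈ Ui U i, C ∈ (P i).clusters := by
    intro C hC
    simp only [Ui, Finset.mem_image, Finset.mem_filter] at hC
    obtain ⟨u, ⟨huU, hui⟩, rfl⟩ := hC
    have := hnode u huU
    rwa [NodeOf, hui] at this
  set M := (Ui U i).sup id with hMdef
  have hM : M = (P i).leaves ∩ A := hsup i
  have hCsubM : ∀ C ∈ Ui U i, C ⊆ M := fun C hC => Finset.le_sup (f := id) hC
  have hMne : M.Nonempty := by
    obtain ⟨C, hC⟩ := hne
    exact ((P i).nonempty_mem C (hCcl C hC)).mono (hCsubM C hC)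
  ext E
  simp only [restrictClusters, restrictFam, Finset.mem_filter, Finset.mem_image,
    Finset.mem_insert]
  constructor
  · rintro ⟨⟨F, hF, rfl⟩, hne2⟩
    have hFleaves := (P i).subset_leaves F hF
    have hFAM : F ∩ A = F ∩ M := by
      rw [hM]; ext x
      simp only [Finset.mem_inter]
      constructor
      · intro hx; exact ⟨hx.1, hFleaves hx.1, hx.2⟩
      · intro hx; exact ⟨hx.1, hx.2.2⟩
    obtain ⟨x, hx⟩ := hne2
    rw [hFAM] at hx ⊢
    have hxM : x ∈ M := (Finset.mem_inter.1 hx).2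
    have hxF : x ∈ F := (Finset.mem_inter.1 hx).1
    obtain ⟨C, hC, hxC⟩ : ∃ C ∈ Ui U i, x ∈ C := by
      simpa [hMdef, Finset.mem_sup] using hxM
    rcases (P i).laminar F hF C (hCcl C hC) with h | h | h
    · exact absurd (Finset.mem_inter.2 ⟨hxF, hxC⟩) (by simp [h])
    · right
      have hFM : F ∩ M = F := Finset.inter_eq_left.2 (h.trans (hCsubM C hC))
      rw [hFM]
      exact ⟨hF, C, hC, h⟩
    · by_cases hcard : 2 ≤ (Ui U i).card
      · obtain ⟨D, hD, hch⟩ := hchild i hcard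
        have hchC := hch C hC
        have hCne := (P i).nonempty_mem C (hCcl C hC)
        rcases (P i).laminar F hF D hD with h2 | h2 | h2
        · exact absurd (hCne.mono (Finset.subset_inter h hchC.2.2.1.subset))
            (by simp [h2])
        · by_cases hFC : F = C
          · right
            rw [Finset.inter_eq_left.2 ((hFC ▸ hCsubM C hC) : F ⊆ M)]
            exact ⟨hF, C, hC, hFC.le⟩
          · have hFD : F = D := by
              by_contra hFD
              exact hchC.2.2.2 F hF
                (Finset.ssubset_iff_subset_ne.2 ⟨h, Ne.symm hFC⟩)
                (Finset.ssubset_iff_subset_ne.2 ⟨h2, hFD⟩)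
            left
            have hMF : M ⊆ F := by
              rw [hMdef]
              exact Finset.sup_le fun C' hC' =>
                ((hch C' hC').2.2.1.subset).trans (le_of_eq hFD.symm)
            exact Finset.inter_eq_right.2 hMF
        · left
          have hMF : M ⊆ F := by
            rw [hMdef]
            exact Finset.sup_le fun C' hC' =>
              ((hch C' hC').2.2.1.subset).trans h2
          exact Finset.inter_eq_right.2 hMF
      · push_neg at hcard
        have hsing : Ui U i = {C} := by
          have h1 : (Ui U i).card = 1 :=
            le_antisymm (by omega) (Finset.one_le_card.2 hne)
          obtain ⟨a, ha⟩ := Finset.card_eq_one.1 h1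
          rw [ha] at hC ⊢
          simp only [Finset.mem_singleton] at hC
          subst hC; rfl
        left
        have hMC : M = C := by rw [hMdef, hsing]; simp
        rw [hMC]
        exact Finset.inter_eq_right.2 h
  · rintro (rfl | ⟨hE, C, hC, hEC⟩)
    · exact ⟨⟨(P i).leaves, (P i).leaves_mem, hM.symm⟩, hMne⟩
    · have hEA : E ∩ A = E := Finset.inter_eq_left.2 (hEC.trans (hCsubA C hC))
      exact ⟨⟨E, hE, hEA⟩, hEA ▸ (P i).nonempty_mem E hE⟩
end

section
/- Let U be a valid subset of V(P) with |U(i)| ≠ 1 for all i. Let G_P(U) be the intersection graph on vertex set U with an edge between u and v iff L(u) ∩ L(v) ≠ ∅, and let W_1,…,W_p be its connected components. Then the connected components of the triplet graph of P|L(U) are exactly L(W_1), …, L(W_p). -/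
attribute [local instance] Classical.propDecidable

variable {S : Type} [DecidableEq S]

lemma mem_LofU {k : ℕ} {U : Finset (Fin k × Finset S)} {a : S} :
    a ∈ LofU U ↔ ∃ u ∈ U, a ∈ u.2 := by
  simp [LofU, Finset.mem_sup]

lemma mem_Ui {k : ℕ} {U : Finset (Fin k × Finset S)} {i : Fin k} {C : Finset S} :
    C ∈ Ui U i ↔ (i, C) ∈ U := by
  simp only [Ui, Finset.mem_image, Finset.mem_filter]
  constructor
  · rintro ⟨⟨j, D⟩, ⟨hm, h1⟩, h2⟩
    cases h1; cases h2; exact hm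
  · intro h; exact ⟨(i, C), ⟨h, rfl⟩, rfl⟩

lemma sib_disj {T : PhyloTree S} {A B D : Finset S} (hA : IsChild T A D)
    (hB : IsChild T B D) (hne : A ≠ B) : A ∩ B = ∅ := by
  rcases T.laminar A hA.1 B hB.1 with h | h | h
  · exact h
  · exact absurd (hA.2.2.2 B hB.1 (lt_of_le_of_ne h hne) hB.2.2.1) not_false
  · exact absurd (hB.2.2.2 A hA.1 (lt_of_le_of_ne h (Ne.symm hne)) hA.2.2.1) not_false

lemma Ui_two {k : ℕ} {U : Finset (Fin k × Finset S)}
    (hcard : ∀ i : Fin k, (Ui U i).card ≠ 1) {i : Fin k}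
    (hne : (Ui U i).Nonempty) : 2 ≤ (Ui U i).card := by
  have h1 : 1 ≤ (Ui U i).card := Finset.card_pos.mpr hne
  have h2 := hcard i
  omega

lemma within_edge {k : ℕ} {P : Fin k → PhyloTree S} {U : Finset (Fin k × Finset S)}
    (hU : Valid P U) (hcard : ∀ i : Fin k, (Ui U i).card ≠ 1)
    {u : Fin k × Finset S} (hu : u ∈ U) {a b : S} (ha : a ∈ u.2) (hb : b ∈ u.2)
    (hab : a ≠ b) : TGEdge P (LofU U) a b := by
  obtain ⟨i, A⟩ := u
  have hAU : A ∈ Ui U i := mem_Ui.mpr hu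
  have h2 : 2 ≤ (Ui U i).card := Ui_two hcard ⟨A, hAU⟩
  obtain ⟨D, hD, hchild⟩ := hU.2.2.1 i h2
  obtain ⟨B, hBU, hBA⟩ := Finset.exists_mem_ne h2 A
  have hBcl : B ∈ (P i).clusters := hU.2.1 (i, B) (mem_Ui.mp hBU)
  have hAcl : A ∈ (P i).clusters := hU.2.1 (i, A) (mem_Ui.mp hAU)
  obtain ⟨c, hc⟩ := (P i).nonempty_mem B hBcl
  have hdisj : A ∩ B = ∅ := sib_disj (hchild A hAU) (hchild B hBU) (Ne.symm hBA)
  have hcnA : c ∉ A := by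
    intro hcA
    have : c ∈ A ∩ B := Finset.mem_inter.mpr ⟨hcA, hc⟩
    rw [hdisj] at this; exact absurd this (Finset.notMem_empty c)
  have hcL : c ∈ LofU U := mem_LofU.mpr ⟨(i, B), mem_Ui.mp hBU, hc⟩
  have haL : a ∈ LofU U := mem_LofU.mpr ⟨(i, A), hu, ha⟩
  have hbL : b ∈ LofU U := mem_LofU.mpr ⟨(i, A), hu, hb⟩
  refine ⟨hab, i, c, Finset.mem_inter.mpr ⟨(P i).subset_leaves B hBcl hc, hcL⟩,
    fun h => hcnA (h ▸ ha), fun h => hcnA (h ▸ hb),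
    A ∩ LofU U, ?_, Finset.mem_inter.mpr ⟨ha, haL⟩,
    Finset.mem_inter.mpr ⟨hb, hbL⟩, fun h => hcnA (Finset.mem_inter.mp h).1⟩
  refine Finset.mem_filter.mpr ⟨Finset.mem_image.mpr ⟨A, hAcl, rfl⟩,
    ⟨a, Finset.mem_inter.mpr ⟨ha, haL⟩⟩⟩

lemma within_rtg {k : ℕ} {P : Fin k → PhyloTree S} {U : Finset (Fin k × Finset S)}
    (hU : Valid P U) (hcard : ∀ i : Fin k, (Ui U i).card ≠ 1)
    {u : Fin k × Finset S} (hu : u ∈ U) {a b : S} (ha : a ∈ u.2) (hb : b ∈ u.2) :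
    Relation.ReflTransGen (TGEdge P (LofU U)) a b := by
  by_cases h : a = b
  · exact h ▸ Relation.ReflTransGen.refl
  · exact Relation.ReflTransGen.single (within_edge hU hcard hu ha hb h)

lemma edge_to_GP {k : ℕ} {P : Fin k → PhyloTree S} {U : Finset (Fin k × Finset S)}
    (hU : Valid P U) (hcard : ∀ i : Fin k, (Ui U i).card ≠ 1) {a b : S}
    (h : TGEdge P (LofU U) a b) :
    ∃ u v : Fin k × Finset S, u ∈ U ∧ v ∈ U ∧ a ∈ u.2 ∧ b ∈ v.2 ∧ GPadj U u v := by
  obtain ⟨hab, i, c, hc, hca, hcb, C, hC, haC, hbC, hcC⟩ := h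
  obtain ⟨hCim, hCne⟩ := Finset.mem_filter.mp hC
  obtain ⟨C₀, hC₀cl, hC₀eq⟩ := Finset.mem_image.mp hCim
  subst hC₀eq
  have haC₀ : a ∈ C₀ := (Finset.mem_inter.mp haC).1
  have hbC₀ : b ∈ C₀ := (Finset.mem_inter.mp hbC).1
  have hcL : c ∈ LofU U := (Finset.mem_inter.mp hc).2
  have hcC₀ : c ∉ C₀ := fun hx => hcC (Finset.mem_inter.mpr ⟨hx, hcL⟩)
  -- get the nodes A ∋ a, B ∋ b, E ∋ c in U(i)
  have hsup := hU.2.2.2 i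
  have haLe : a ∈ (P i).leaves ∩ LofU U :=
    Finset.mem_inter.mpr ⟨(P i).subset_leaves C₀ hC₀cl haC₀, (Finset.mem_inter.mp haC).2⟩
  have hbLe : b ∈ (P i).leaves ∩ LofU U :=
    Finset.mem_inter.mpr ⟨(P i).subset_leaves C₀ hC₀cl hbC₀, (Finset.mem_inter.mp hbC).2⟩
  rw [← hsup] at haLe hbLe
  rw [← hsup] at hc
  obtain ⟨A, hAU, haA⟩ := Finset.mem_sup.mp haLe
  obtain ⟨B, hBU, hbB⟩ := Finset.mem_sup.mp hbLe
  obtain ⟨E, hEU, hcE⟩ := Finset.mem_sup.mp hc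
  simp only [id] at haA hbB hcE
  have h2 : 2 ≤ (Ui U i).card := Ui_two hcard ⟨A, hAU⟩
  obtain ⟨D, hD, hchild⟩ := hU.2.2.1 i h2
  -- C₀ ⊂ D
  have hED : E ⊂ D := (hchild E hEU).2.2.1
  have hC₀D : C₀ ⊂ D := by
    rcases (P i).laminar C₀ hC₀cl D hD with hh | hh | hh
    · exfalso
      have : a ∈ C₀ ∩ D := Finset.mem_inter.mpr ⟨haC₀, (hchild A hAU).2.2.1.1 haA⟩
      rw [hh] at this; exact absurd this (Finset.notMem_empty a)
    · exact lt_of_le_of_ne hh (fun he => hcC₀ (he ▸ hED.1 hcE))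
    · exact absurd (hh (hED.1 hcE)) hcC₀
  -- C₀ ⊆ A
  have hC₀A : C₀ ⊆ A := by
    rcases (P i).laminar C₀ hC₀cl A ((hchild A hAU).1) with hh | hh | hh
    · exfalso
      have : a ∈ C₀ ∩ A := Finset.mem_inter.mpr ⟨haC₀, haA⟩
      rw [hh] at this; exact absurd this (Finset.notMem_empty a)
    · exact hh
    · rcases eq_or_lt_of_le hh with he | hlt
      · exact he.ge
      · exact absurd ((hchild A hAU).2.2.2 C₀ hC₀cl hlt hC₀D) not_false
  exact ⟨(i, A), (i, B), mem_Ui.mp hAU, mem_Ui.mp hBU, haA, hbB,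
    mem_Ui.mp hAU, mem_Ui.mp hBU, ⟨b, Finset.mem_inter.mpr ⟨hC₀A hbC₀, hbB⟩⟩⟩

/-- **Lemma 5(ii).** If `U` is valid with `|U(i)| ≠ 1` for all
`i`, then the connected components of the triplet graph of `P|L(U)` are
exactly the sets `L(W)` for `W` a connected component of the intersection
graph `G_P(U)`: two species of `L(U)` are connected in the triplet graph iff
they belong to clusters of nodes of `U` that are connected in `G_P(U)`. -/
theorem stmt9 {k : ℕ} (P : Fin k → PhyloTree S)
    (U : Finset (Fin k × Finset S)) (hU : Valid P U)
    (hcard : ∀ i : Fin k, (Ui U i).card ≠ 1)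
    (a b : S) (ha : a ∈ LofU U) (hb : b ∈ LofU U) :
    Relation.ReflTransGen (TGEdge P (LofU U)) a b ↔
      ∃ u v : Fin k × Finset S, u ∈ U ∧ v ∈ U ∧ a ∈ u.2 ∧ b ∈ v.2 ∧
        Relation.ReflTransGen (GPadj U) u v := by
  constructor
  · intro h
    clear hb
    induction h with
    | refl =>
      obtain ⟨u, hu, hau⟩ := mem_LofU.mp ha
      exact ⟨u, u, hu, hu, hau, hau, Relation.ReflTransGen.refl⟩
    | @tail x y hax hxy ih =>
      obtain ⟨u, v, hu, hv, hau, hxv, hrtg⟩ := ih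
      obtain ⟨u', v', hu', hv', hxu', hyv', hadj⟩ := edge_to_GP hU hcard hxy
      refine ⟨u, v', hu, hv', hau, hyv', ?_⟩
      exact (hrtg.tail ⟨hv, hu', ⟨x, Finset.mem_inter.mpr ⟨hxv, hxu'⟩⟩⟩).tail hadj
  · rintro ⟨u, v, hu, hv, hau, hbv, hrtg⟩
    have key : ∀ v : Fin k × Finset S, Relation.ReflTransGen (GPadj U) u v →
        ∀ b' ∈ v.2, Relation.ReflTransGen (TGEdge P (LofU U)) a b' := by
      intro v hrtg
      induction hrtg with
      | refl => intro b' hb'; exact within_rtg hU hcard hu hau hb'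
      | @tail w v' hw hwv ih =>
        intro b' hb'
        obtain ⟨hwU, hv'U, x, hx⟩ := hwv
        have h1 := ih x (Finset.mem_inter.mp hx).1
        exact h1.trans (within_rtg hU hcard hv'U (Finset.mem_inter.mp hx).2 hb')
    exact key v hrtg b hbv
end

section
/- Let U be a valid subset of V(P), and let W be a connected component of the intersection graph G_P(U) (vertices U, edges between nodes with intersecting clusters). Then W is itself a valid subset of V(P). -/
attribute [local instance] Classical.propDecidable

variable {S : Type} [DecidableEq S]

/-- **Lemma 5(i).** Any connected component `W` of the
intersection graph `G_P(U)` of a valid set `U` is itself valid. -/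
theorem stmt10 {k : ℕ} (P : Fin k → PhyloTree S)
    (U : Finset (Fin k × Finset S)) (hU : Valid P U)
    (w : Fin k × Finset S) (hw : w ∈ U) :
    Valid P (U.filter (fun u => Relation.ReflTransGen (GPadj U) w u)) := by
  classical
  obtain ⟨hne, hnode, hV1, hV2⟩ := hU
  set W := U.filter (fun u => Relation.ReflTransGen (GPadj U) w u) with hWdef
  have hWsub : W ⊆ U := Finset.filter_subset _ _
  have hsym : ∀ u v, GPadj U u v → GPadj U v u := by
    rintro u v ⟨h1, h2, h3⟩
    exact ⟨h2, h1, by rwa [Finset.inter_comm]⟩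
  have hsubUi : ∀ i, Ui W i ⊆ Ui U i := by
    intro i C hC
    simp only [Ui, Finset.mem_image, Finset.mem_filter] at hC ⊢
    obtain ⟨u, ⟨huW, hui⟩, huC⟩ := hC
    exact ⟨u, ⟨hWsub huW, hui⟩, huC⟩
  refine ⟨⟨w, ?_⟩, fun u hu => hnode u (hWsub hu), ?_, ?_⟩
  · simp only [hWdef, Finset.mem_filter]
    exact ⟨hw, Relation.ReflTransGen.refl⟩
  · intro i hcard
    have hcard' : 2 ≤ (Ui U i).card :=
      le_trans hcard (Finset.card_le_card (hsubUi i))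
    obtain ⟨D, hD, hchild⟩ := hV1 i hcard'
    exact ⟨D, hD, fun C hC => hchild C (hsubUi i hC)⟩
  · intro i
    apply Finset.Subset.antisymm
    · intro x hx
      rw [Finset.mem_sup] at hx
      obtain ⟨C, hC, hxC⟩ := hx
      simp only [Ui, Finset.mem_image, Finset.mem_filter] at hC
      obtain ⟨u, ⟨huW, hui⟩, huC⟩ := hC
      refine Finset.mem_inter.2 ⟨?_, ?_⟩
      · subst huC
        exact (P i).subset_leaves u.2 (by rw [← hui]; exact hnode u (hWsub huW)) hxC
      · rw [LofU, Finset.mem_sup]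
        exact ⟨u, huW, by rw [huC]; exact hxC⟩
    · intro x hx
      rw [Finset.mem_inter] at hx
      obtain ⟨hxL, hxW⟩ := hx
      rw [LofU, Finset.mem_sup] at hxW
      obtain ⟨v, hvW, hxv⟩ := hxW
      have hxU : x ∈ (P i).leaves ∩ LofU U := by
        refine Finset.mem_inter.2 ⟨hxL, ?_⟩
        rw [LofU, Finset.mem_sup]
        exact ⟨v, hWsub hvW, hxv⟩
      rw [← hV2 i, Finset.mem_sup] at hxU
      obtain ⟨C, hC, hxC⟩ := hxU
      simp only [Ui, Finset.mem_image, Finset.mem_filter] at hC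
      obtain ⟨u, ⟨huU, hui⟩, huC⟩ := hC
      have hadj : GPadj U v u :=
        ⟨hWsub hvW, huU, ⟨x, Finset.mem_inter.2 ⟨hxv, by rw [huC]; exact hxC⟩⟩⟩
      have hv : Relation.ReflTransGen (GPadj U) w v := by
        simp only [hWdef, Finset.mem_filter] at hvW
        exact hvW.2
      have huW : u ∈ W := by
        simp only [hWdef, Finset.mem_filter]
        exact ⟨huU, hv.tail hadj⟩
      rw [Finset.mem_sup]
      refine ⟨C, ?_, hxC⟩
      simp only [Ui, Finset.mem_image, Finset.mem_filter]
      exact ⟨u, ⟨huW, hui⟩, huC⟩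
end

section
/- Let P be a profile and define the graph H_P with vertex set V(P) ∪ {x_s : s ∈ L(P)} (one new vertex per species), edges E(P) together with edges (u, x_s) for each leaf u labeled s. For any valid subset U of V(P), let H_P(U) be the subgraph induced by all descendants of nodes of U together with {x_s : s ∈ L(U)}. Then two nodes u, v ∈ U lie in the same connected component of the intersection graph G_P(U) if and only if they lie in the same connected component of H_P(U). -/
attribute [local instance] Classical.propDecidable

variable {S : Type} [DecidableEq S]

/-- Vertices of the graph `H_P(U)`: nodes of trees of `P` that are descendants
of a node of `U` (a node is a descendant of itself), together with the species
vertices `x_s` for `s ∈ L(U)`. -/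
def InHU {k : ℕ} (P : Fin k → PhyloTree S) (U : Finset (Fin k × Finset S)) :
    (Fin k × Finset S) ⊕ S → Prop
  | Sum.inl u => NodeOf P u ∧ ∃ w ∈ U, w.1 = u.1 ∧ u.2 ⊆ w.2
  | Sum.inr s => s ∈ LofU U

/-- Adjacency in `H_P(U)`: tree edges (parent–child pairs) between vertices of
`H_P(U)`, plus edges joining each leaf to the species vertex of its label. -/
def HAdjU {k : ℕ} (P : Fin k → PhyloTree S) (U : Finset (Fin k × Finset S)) :
    (Fin k × Finset S) ⊕ S → (Fin k × Finset S) ⊕ S → Prop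
  | Sum.inl u, Sum.inl v =>
      InHU P U (Sum.inl u) ∧ InHU P U (Sum.inl v) ∧ u.1 = v.1 ∧
        (IsChild (P u.1) u.2 v.2 ∨ IsChild (P u.1) v.2 u.2)
  | Sum.inl u, Sum.inr s =>
      InHU P U (Sum.inl u) ∧ InHU P U (Sum.inr s) ∧ u.2 = {s}
  | Sum.inr s, Sum.inl u =>
      InHU P U (Sum.inl u) ∧ InHU P U (Sum.inr s) ∧ u.2 = {s}
  | Sum.inr _, Sum.inr _ => False

/-!
Every vertex `x` of `H_P(U)` carries a cluster (`vertexCluster x`: the cluster of a tree node, or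
`{s}` for the species vertex `x_s`), contained in the cluster of some node of `U`, and the clusters
of the two ends of an edge of `H_P(U)` are nested. Following a path of `H_P(U)` and choosing at
each vertex a node of `U` above it therefore gives a walk in `G_P(U)`: consecutive choices share
a species. Conversely, if `u, v ∈ U` share a species `s`, descending from `u` to its leaf `s`,
crossing `x_s` and climbing up to `v` is a path of `H_P(U)`.
-/

lemma PhyloTree.exists_isChild_mem (T : PhyloTree S) {C : Finset S} (hC : C ∈ T.clusters)
    {s : S} (hs : s ∈ C) (hne : C ≠ {s}) : ∃ E, IsChild T E C ∧ s ∈ E := by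
  set F := T.clusters.filter (fun E => s ∈ E ∧ E ⊂ C)
  have hsF : {s} ∈ F := Finset.mem_filter.2 ⟨T.singleton_mem s (T.subset_leaves C hC hs),
    Finset.mem_singleton_self s, (Finset.singleton_subset_iff.2 hs).ssubset_of_ne hne.symm⟩
  obtain ⟨E, hEF, hEmax⟩ := F.exists_max_image Finset.card ⟨_, hsF⟩
  obtain ⟨hE, hsE, hEC⟩ := Finset.mem_filter.1 hEF
  refine ⟨E, ⟨hE, hC, hEC, fun E' hE' hEE' hE'C => ?_⟩, hsE⟩
  have := hEmax E' (Finset.mem_filter.2 ⟨hE', hEE'.subset hsE, hE'C⟩)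
  exact (Finset.card_lt_card hEE').not_ge this

section HGraph

variable {k : ℕ} {P : Fin k → PhyloTree S} {U : Finset (Fin k × Finset S)}

instance : Std.Symm (HAdjU P U) where
  symm
    | .inl _, .inl _, ⟨hu, hv, hi, hc⟩ => ⟨hv, hu, hi.symm, hi ▸ hc.symm⟩
    | .inl _, .inr _, h => h
    | .inr _, .inl _, h => h

lemma inHU_inl_of_mem {u : Fin k × Finset S} (hu : u ∈ U) (hnode : NodeOf P u) :
    InHU P U (.inl u) :=
  ⟨hnode, u, hu, rfl, subset_rfl⟩

lemma reflTransGen_hAdjU_inr {w : Fin k × Finset S} (hw : InHU P U (.inl w)) {s : S}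
    (hs : s ∈ w.2) : Relation.ReflTransGen (HAdjU P U) (.inl w) (.inr s) := by
  induction hn : w.2.card using Nat.strong_induction_on generalizing w with
  | _ n ih =>
    obtain ⟨p, hp, hpw, hwp⟩ := hw.2
    have hsU : s ∈ LofU U := Finset.mem_sup.2 ⟨p, hp, hwp hs⟩
    by_cases hleaf : w.2 = {s}
    · exact .single ⟨hw, hsU, hleaf⟩
    obtain ⟨E, hE, hsE⟩ := (P w.1).exists_isChild_mem hw.1 hs hleaf
    have hEw : InHU P U (.inl (w.1, E)) := ⟨hE.1, p, hp, hpw, hE.2.2.1.subset.trans hwp⟩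
    have hwE : HAdjU P U (.inl w) (.inl (w.1, E)) := ⟨hw, hEw, rfl, .inr hE⟩
    exact .head hwE (ih _ (hn ▸ Finset.card_lt_card hE.2.2.1) hEw hsE rfl)

lemma reflTransGen_hAdjU_of_gPadj (hU : ∀ u ∈ U, NodeOf P u) {u v : Fin k × Finset S}
    (huv : GPadj U u v) : Relation.ReflTransGen (HAdjU P U) (.inl u) (.inl v) := by
  obtain ⟨hu, hv, s, hs⟩ := huv
  rw [Finset.mem_inter] at hs
  exact (reflTransGen_hAdjU_inr (inHU_inl_of_mem hu (hU u hu)) hs.1).trans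
    (Std.Symm.symm _ _ (reflTransGen_hAdjU_inr (inHU_inl_of_mem hv (hU v hv)) hs.2))

def vertexCluster : (Fin k × Finset S) ⊕ S → Finset S
  | .inl w => w.2
  | .inr s => {s}

lemma InHU.vertexCluster_nonempty {x : (Fin k × Finset S) ⊕ S} (hx : InHU P U x) :
    (vertexCluster x).Nonempty := by
  cases x with
  | inl w => exact (P w.1).nonempty_mem w.2 hx.1
  | inr s => exact Finset.singleton_nonempty s

lemma InHU.exists_mem_vertexCluster_subset {x : (Fin k × Finset S) ⊕ S} (hx : InHU P U x) :
    ∃ p ∈ U, vertexCluster x ⊆ p.2 := by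
  cases x with
  | inl w => exact hx.2.imp fun p hp => ⟨hp.1, hp.2.2⟩
  | inr s =>
    exact (Finset.mem_sup.1 hx).imp fun p hp => ⟨hp.1, Finset.singleton_subset_iff.2 hp.2⟩

lemma HAdjU.inHU_and_vertexCluster_nested {x y : (Fin k × Finset S) ⊕ S} (h : HAdjU P U x y) :
    InHU P U x ∧ InHU P U y ∧
      (vertexCluster x ⊆ vertexCluster y ∨ vertexCluster y ⊆ vertexCluster x) := by
  match x, y, h with
  | .inl _, .inl _, ⟨hu, hv, _, hc⟩ =>
    exact ⟨hu, hv, hc.imp (·.2.2.1.subset) (·.2.2.1.subset)⟩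
  | .inl _, .inr _, ⟨hu, hs, he⟩ => exact ⟨hu, hs, .inl he.subset⟩
  | .inr _, .inl _, ⟨hu, hs, he⟩ => exact ⟨hs, hu, .inr he.subset⟩

lemma gPadj_of_nonempty_subset {p q : Fin k × Finset S} (hp : p ∈ U) (hq : q ∈ U)
    {X : Finset S} (hX : X.Nonempty) (hXp : X ⊆ p.2) (hXq : X ⊆ q.2) : GPadj U p q :=
  ⟨hp, hq, hX.mono (Finset.subset_inter hXp hXq)⟩

lemma exists_reflTransGen_gPadj_of_reflTransGen_hAdjU {u : Fin k × Finset S} (hu : u ∈ U)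
    {x : (Fin k × Finset S) ⊕ S} (hux : Relation.ReflTransGen (HAdjU P U) (.inl u) x) :
    ∃ p ∈ U, vertexCluster x ⊆ p.2 ∧ Relation.ReflTransGen (GPadj U) u p := by
  induction hux with
  | refl => exact ⟨u, hu, subset_rfl, .refl⟩
  | tail _ hyz ih =>
    obtain ⟨p, hp, hyp, hup⟩ := ih
    obtain ⟨hy, hz, hnest⟩ := hyz.inHU_and_vertexCluster_nested
    obtain ⟨q, hq, hzq⟩ := hz.exists_mem_vertexCluster_subset
    refine ⟨q, hq, hzq, hup.tail ?_⟩
    rcases hnest with hyz | hzy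
    · exact gPadj_of_nonempty_subset hp hq hy.vertexCluster_nonempty hyp (hyz.trans hzq)
    · exact gPadj_of_nonempty_subset hp hq hz.vertexCluster_nonempty (hzy.trans hyp) hzq

end HGraph

/-- **Lemma 6(ii).** For a valid `U`, two nodes `u, v ∈ U` are
in the same connected component of the intersection graph `G_P(U)` iff they
are in the same connected component of `H_P(U)`. -/
theorem stmt12 {k : ℕ} (P : Fin k → PhyloTree S)
    (U : Finset (Fin k × Finset S)) (hU : Valid P U)
    (u v : Fin k × Finset S) (hu : u ∈ U) (hv : v ∈ U) :
    Relation.ReflTransGen (GPadj U) u v ↔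
      Relation.ReflTransGen (HAdjU P U) (Sum.inl u) (Sum.inl v) := by
  refine ⟨Relation.ReflTransGen.lift' Sum.inl
    (fun _ _ => reflTransGen_hAdjU_of_gPadj hU.2.1) u v, fun huv => ?_⟩
  obtain ⟨p, hp, hvp, hup⟩ := exists_reflTransGen_gPadj_of_reflTransGen_hAdjU hu huv
  have hv' : InHU P U (.inl v) := inHU_inl_of_mem hv (hU.2.1 v hv)
  exact hup.tail (gPadj_of_nonempty_subset hp hv hv'.vertexCluster_nonempty hvp subset_rfl)
end
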